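/- Let K be a field and consider ℤ-graded K-vector spaces with the graded tensor product. A ℤ-graded K-vector space V is invertible (i.e. there exists W with V ⊗ W ≅ K concentrated in degree 0) if and only if V is one-dimensional and concentrated in a single degree. -/

import Mathlib

/-!
Everything is read off from ranks. If `V ⊗ W` is the unit, its degree-`0` piece
`⨁ₐ Vₐ ⊗ W₋ₐ` is a line, so some summand `Vₐ ⊗ W₋ₐ` is a line, which forces `Vₐ` and `W₋ₐ`
to be lines. For `n ≠ a` the summand `Vₙ ⊗ W₋ₐ ≅ Vₙ` sits in the degree-`(n - a)` piece,
which vanishes. Conversely, if `V` is a line in degree `d`, then `n ↦ V₋ₙ` is a line in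
degree `-d` and its tensor product with `V` is a line in degree `0`.
-/

open scoped TensorProduct DirectSum

/-- The degree-`n` piece of the graded tensor product of two `ℤ`-graded
`K`-vector spaces. -/
noncomputable def gradedTensorPiece (K : Type) [Field K]
    (V W : ℤ → ModuleCat K) (n : ℤ) : Type :=
  DirectSum {p : ℤ × ℤ // p.1 + p.2 = n} fun p => (V p.1.1) ⊗[K] (W p.1.2)

noncomputable instance (K : Type) [Field K] (V W : ℤ → ModuleCat K) (n : ℤ) :
    AddCommGroup (gradedTensorPiece K V W n) := by
  unfold gradedTensorPiece; infer_instance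

noncomputable instance (K : Type) [Field K] (V W : ℤ → ModuleCat K) (n : ℤ) :
    Module K (gradedTensorPiece K V W n) := by
  unfold gradedTensorPiece; infer_instance

namespace DirectSum

universe v w

variable {ι : Type v} {M : ι → Type w}

theorem subsingleton_iff [∀ i, AddCommMonoid (M i)] :
    Subsingleton (⨁ i, M i) ↔ ∀ i, Subsingleton (M i) := by
  classical
  exact ⟨fun _ i => (of_injective (β := M) i).subsingleton, fun _ => inferInstance⟩

noncomputable def linearEquivOfSubsingleton {R : Type*} [Semiring R] [∀ i, AddCommMonoid (M i)]
    [∀ i, Module R (M i)] [DecidableEq ι] (i : ι) (h : ∀ j, j ≠ i → Subsingleton (M j)) :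
    (⨁ j, M j) ≃ₗ[R] M i :=
  LinearEquiv.ofLinearMap (component R ι M i) (lof R ι M i) (by ext; simp) <| by
    refine LinearMap.ext fun x => DFinsupp.ext fun j => ?_
    by_cases hj : j = i
    · subst hj
      exact lof_apply R j (component R ι M j x)
    · exact (h j hj).elim _ _

theorem exists_rank_eq_one {K : Type*} [DivisionRing K] [∀ i, AddCommGroup (M i)]
    [∀ i, Module K (M i)] (h : Module.rank K (⨁ i, M i) = 1) :
    ∃ i, Module.rank K (M i) = 1 := by
  classical
  obtain ⟨i, hi⟩ : ∃ i, Nontrivial (M i) := by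
    by_contra! hM
    have := subsingleton_iff.2 hM
    simp [rank_subsingleton'] at h
  have hle : Module.rank K (M i) ≤ 1 := by
    simpa [h] using LinearMap.lift_rank_le_of_injective (lof K ι M i) (of_injective i)
  exact ⟨i, hle.antisymm (Cardinal.one_le_iff_pos.2 (rank_pos_iff_nontrivial.2 hi))⟩

end DirectSum

section Field

variable {K M N : Type*} [Field K] [AddCommGroup M] [Module K M] [AddCommGroup N] [Module K N]

theorem nonempty_linearEquiv_self_iff_rank_eq_one :
    Nonempty (M ≃ₗ[K] K) ↔ Module.rank K M = 1 :=
  (⟨fun ⟨e⟩ => ⟨e.symm⟩, fun ⟨e⟩ => ⟨e.symm⟩⟩ : Nonempty (M ≃ₗ[K] K) ↔ Nonempty (K ≃ₗ[K] M)).trans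
    Module.nonempty_linearEquiv_iff_rank_eq_one

theorem TensorProduct.subsingleton_iff_of_field :
    Subsingleton (M ⊗[K] N) ↔ Subsingleton M ∨ Subsingleton N := by
  simp only [← rank_zero_iff (R := K), rank_tensorProduct, mul_eq_zero, Cardinal.lift_eq_zero]

theorem rank_tensorProduct_eq_one_iff :
    Module.rank K (M ⊗[K] N) = 1 ↔ Module.rank K M = 1 ∧ Module.rank K N = 1 := by
  simp [mul_eq_one]

end Field

section Graded

variable {K : Type} [Field K] {V W : ℤ → ModuleCat K}

theorem subsingleton_gradedTensorPiece_iff {n : ℤ} :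
    Subsingleton (gradedTensorPiece K V W n) ↔ ∀ i j, i + j = n → Subsingleton (V i ⊗[K] W j) :=
  DirectSum.subsingleton_iff.trans ⟨fun h i j hij => h ⟨(i, j), hij⟩, fun h p => h _ _ p.2⟩

theorem exists_rank_eq_one_of_rank_gradedTensorPiece_zero
    (h : Module.rank K (gradedTensorPiece K V W 0) = 1) :
    ∃ a, Module.rank K (V a) = 1 ∧ Module.rank K (W (-a)) = 1 := by
  obtain ⟨⟨⟨a, b⟩, hab⟩, hrank⟩ := DirectSum.exists_rank_eq_one h
  obtain rfl : b = -a := by omega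
  exact ⟨a, rank_tensorProduct_eq_one_iff.1 hrank⟩

variable {d e : ℤ}

theorem subsingleton_tensorProduct_of_ne (hV : ∀ n, n ≠ d → Subsingleton (V n))
    (hW : ∀ n, n ≠ e → Subsingleton (W n)) {i j : ℤ} (h : (i, j) ≠ (d, e)) :
    Subsingleton (V i ⊗[K] W j) := by
  refine TensorProduct.subsingleton_iff_of_field.2 ?_
  by_cases hi : i = d
  · exact Or.inr (hW j fun hj => h (by rw [hi, hj]))
  · exact Or.inl (hV i hi)

theorem subsingleton_gradedTensorPiece_of_ne (hV : ∀ n, n ≠ d → Subsingleton (V n))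
    (hW : ∀ n, n ≠ e → Subsingleton (W n)) {n : ℤ} (hn : n ≠ d + e) :
    Subsingleton (gradedTensorPiece K V W n) :=
  subsingleton_gradedTensorPiece_iff.2 fun i j hij =>
    subsingleton_tensorProduct_of_ne hV hW fun h => hn (by simp_all)

noncomputable def gradedTensorPieceEquivOfConcentrated (hV : ∀ n, n ≠ d → Subsingleton (V n))
    (hW : ∀ n, n ≠ e → Subsingleton (W n)) {n : ℤ} (hn : d + e = n) :
    gradedTensorPiece K V W n ≃ₗ[K] V d ⊗[K] W e :=
  DirectSum.linearEquivOfSubsingleton ⟨(d, e), hn⟩ fun _ hp =>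
    subsingleton_tensorProduct_of_ne hV hW fun h => hp (Subtype.ext h)

end Graded

/-- A graded vector space is invertible iff its graded tensor product with some `W`
is isomorphic (degreewise) to the unit: `K` in degree `0` and `0` elsewhere. -/
theorem stmt_15 (K : Type) [Field K] (V : ℤ → ModuleCat K) :
    (∃ W : ℤ → ModuleCat K,
        Nonempty (gradedTensorPiece K V W 0 ≃ₗ[K] K) ∧
        ∀ n : ℤ, n ≠ 0 → Subsingleton (gradedTensorPiece K V W n)) ↔
      ∃ d : ℤ, Nonempty (V d ≃ₗ[K] K) ∧ ∀ n : ℤ, n ≠ d → Subsingleton (V n) := by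
  simp only [nonempty_linearEquiv_self_iff_rank_eq_one]
  constructor
  · rintro ⟨W, h0, hW⟩
    obtain ⟨a, hVa, hWa⟩ := exists_rank_eq_one_of_rank_gradedTensorPiece_zero h0
    have : Nontrivial (W (-a)) := rank_pos_iff_nontrivial.1 (hWa ▸ zero_lt_one)
    refine ⟨a, hVa, fun n hn => ?_⟩
    have := subsingleton_gradedTensorPiece_iff.1 (hW (n + -a) (by omega)) n (-a) rfl
    exact (TensorProduct.subsingleton_iff_of_field.1 this).resolve_right (not_subsingleton _)
  · rintro ⟨d, hVd, hV⟩
    have hW : ∀ n, n ≠ -d → Subsingleton (V (-n)) := fun n hn => hV (-n) (by omega)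
    refine ⟨fun n => V (-n), ?_, fun n hn => subsingleton_gradedTensorPiece_of_ne hV hW (by omega)⟩
    rw [(gradedTensorPieceEquivOfConcentrated hV hW (add_neg_cancel d)).rank_eq]
    exact rank_tensorProduct_eq_one_iff.2 ⟨hVd, by rwa [neg_neg]⟩
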